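/- Let q > 0. The Mittag-Leffler Bargmann transform B_q defined by B_q(φ)(z) = ∫_ℝ conj(A_q(z,x)) φ(x) dx is an isometry from L²(ℝ,ℂ) into ML_q(ℂ): for every φ ∈ L²(ℝ), ‖B_q(φ)‖_{ML_q} = ‖φ‖_{L²(ℝ)}. -/

import Mathlib

open MeasureTheory Complex

/-- The ML-Bargmann kernel `A_q(z,x) = ∑ conj(z)ⁿ ψₙ(x)/√Γ(qn+1)`. -/
noncomputable def Aq (q : ℝ) (ψ : ℕ → ℝ → ℂ) (z : ℂ) (x : ℝ) : ℂ :=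
  ∑' n : ℕ, ((starRingEnd ℂ) z) ^ n / (Real.sqrt (Real.Gamma (q * n + 1)) : ℂ) * ψ n x

open Filter in
lemma summable_pow_div_sqrtGamma (q : ℝ) (hq : 0 < q) (r : ℝ) (hr : 0 ≤ r) :
    Summable (fun n : ℕ => r ^ n / Real.sqrt (Real.Gamma (q * n + 1))) := by
  set R : ℝ := (r + 1) ^ 2 with hR
  have hR1 : (1 : ℝ) ≤ R := by nlinarith
  have hR0 : (0 : ℝ) ≤ R := by positivity
  set S : ℝ := R ^ (2 / q) with hS
  have hS1 : (1 : ℝ) ≤ S := Real.one_le_rpow hR1 (by positivity)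
  -- eventually S ^ k ≤ k!
  have h0 : Tendsto (fun k : ℕ => S ^ k / (k.factorial : ℝ)) atTop (nhds 0) :=
    (Real.summable_pow_div_factorial S).tendsto_atTop_zero
  obtain ⟨N₀, hN₀⟩ := (h0.eventually_lt_const (by norm_num : (0:ℝ) < 1)).exists_forall_of_atTop
  have hfac : ∀ k : ℕ, N₀ ≤ k → S ^ k ≤ (k.factorial : ℝ) := by
    intro k hk
    have h1 := hN₀ k hk
    have hkpos : (0:ℝ) < k.factorial := by exact_mod_cast k.factorial_pos
    nlinarith [(div_lt_one hkpos).mp h1]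
  -- eventual bound
  have hev : ∀ᶠ n : ℕ in atTop, r ^ n / Real.sqrt (Real.Gamma (q * n + 1))
      ≤ (r / (r + 1)) ^ n := by
    have htend : Tendsto (fun n : ℕ => q * n) atTop atTop :=
      (tendsto_natCast_atTop_atTop (R := ℝ)).const_mul_atTop hq
    filter_upwards [htend.eventually_ge_atTop (max 2 (2 * N₀))] with n hn
    have hn2 : (2 : ℝ) ≤ q * n := le_trans (le_max_left _ _) hn
    have hnN : (2 * N₀ : ℝ) ≤ q * n := by
      exact_mod_cast le_trans (le_max_right _ _) hn
    set k : ℕ := ⌊q * n⌋₊ with hk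
    have hk2 : (2 : ℕ) ≤ k := Nat.le_floor (by exact_mod_cast hn2)
    have hkle : (k : ℝ) ≤ q * n := Nat.floor_le (by positivity)
    have hkgt : q * n - 1 < (k : ℝ) := by
      have := Nat.lt_floor_add_one (q * n); linarith
    have hkhalf : q * n / 2 ≤ (k : ℝ) := by linarith
    have hkN₀ : N₀ ≤ k := by
      have : (N₀ : ℝ) ≤ (k : ℝ) := by linarith
      exact_mod_cast this
    -- Γ(qn+1) ≥ k!
    have hmono : Real.Gamma ((k : ℝ) + 1) ≤ Real.Gamma (q * n + 1) := by
      rcases eq_or_lt_of_le (by linarith : (k : ℝ) + 1 ≤ q * n + 1) with h | h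
      · rw [h]
      · refine le_of_lt (Real.Gamma_strictMonoOn_Ici ?_ ?_ h)
        · simp only [Set.mem_Ici]
          have : (2:ℝ) ≤ (k:ℝ) := by exact_mod_cast hk2
          linarith
        · simp only [Set.mem_Ici]; linarith
    rw [Real.Gamma_nat_eq_factorial] at hmono
    -- k! ≥ S ^ k ≥ S ^ (qn/2) = R ^ n
    have h1 : S ^ (q * n / 2) ≤ S ^ (k : ℝ) :=
      Real.rpow_le_rpow_of_exponent_le hS1 hkhalf
    rw [Real.rpow_natCast] at h1
    have h2 : S ^ (q * n / 2) = R ^ (n : ℝ) := by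
      rw [hS, ← Real.rpow_mul hR0]
      congr 1
      field_simp
    have h3 : R ^ (n : ℝ) ≤ Real.Gamma (q * n + 1) := by
      calc R ^ (n : ℝ) = S ^ (q * n / 2) := h2.symm
        _ ≤ S ^ k := h1
        _ ≤ (k.factorial : ℝ) := hfac k hkN₀
        _ ≤ _ := hmono
    have h4 : ((r + 1) ^ n) ^ 2 ≤ Real.Gamma (q * n + 1) := by
      rw [Real.rpow_natCast R n, hR, ← pow_mul, mul_comm 2 n, pow_mul] at h3
      exact h3
    have h5 : (r + 1) ^ n ≤ Real.sqrt (Real.Gamma (q * n + 1)) :=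
      Real.le_sqrt_of_sq_le h4
    have h6 : (0:ℝ) < (r + 1) ^ n := by positivity
    calc r ^ n / Real.sqrt (Real.Gamma (q * n + 1)) ≤ r ^ n / (r + 1) ^ n := by
          gcongr
      _ = (r / (r + 1)) ^ n := (div_pow r _ n).symm
  -- conclude
  have hgeo : Summable (fun n : ℕ => (r / (r + 1)) ^ n) := by
    apply summable_geometric_of_lt_one (by positivity)
    rw [div_lt_one (by linarith)]; linarith
  refine summable_of_isBigO_nat hgeo ?_
  rw [Asymptotics.isBigO_iff]
  refine ⟨1, ?_⟩
  filter_upwards [hev] with n hn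
  have h1 : (0:ℝ) ≤ r ^ n / Real.sqrt (Real.Gamma (q * n + 1)) := by positivity
  have h2 : (0:ℝ) ≤ (r / (r + 1)) ^ n := by positivity
  rw [Real.norm_of_nonneg h1, Real.norm_of_nonneg h2, one_mul]
  exact hn

lemma lintegral_nnnorm_sq {g : ℝ → ℂ} (hg : MemLp g 2 (volume : Measure ℝ)) :
    ∫⁻ x : ℝ, (‖g x‖₊ : ENNReal) ^ (2 : ℝ) ∂(volume : Measure ℝ)
      = ENNReal.ofReal (∫ x : ℝ, ‖g x‖ ^ 2) := by
  rw [MeasureTheory.ofReal_integral_eq_lintegral_ofReal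
      ((memLp_two_iff_integrable_sq_norm hg.1).mp hg)
      (Filter.Eventually.of_forall fun x => sq_nonneg _)]
  refine lintegral_congr fun x => ?_
  rw [← ENNReal.ofReal_coe_nnreal, coe_nnnorm,
    show ‖g x‖ ^ 2 = ‖g x‖ ^ (2:ℝ) by
      rw [← Real.rpow_natCast ‖g x‖ 2]; norm_num,
    ENNReal.ofReal_rpow_of_nonneg (norm_nonneg _) (by norm_num : (0:ℝ) ≤ 2)]

lemma integral_norm_sq_eq_one {g : ℝ → ℂ} (hg : MemLp g 2 (volume : Measure ℝ))
    (h : ∫ x : ℝ, g x * (starRingEnd ℂ) (g x) = 1) : (∫ x : ℝ, ‖g x‖ ^ 2) = 1 := by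
  have h2 : ∫ x : ℝ, ((‖g x‖ ^ 2 : ℝ) : ℂ) = 1 := by
    rw [← h]
    refine integral_congr_ae (Filter.Eventually.of_forall fun x => ?_)
    show ((‖g x‖ ^ 2 : ℝ) : ℂ) = g x * (starRingEnd ℂ) (g x)
    rw [RCLike.mul_conj]
    norm_cast
  have h3 : ∫ x : ℝ, Complex.ofRealCLM (‖g x‖ ^ 2)
      = Complex.ofRealCLM (∫ x : ℝ, ‖g x‖ ^ 2) :=
    ContinuousLinearMap.integral_comp_comm _ ((memLp_two_iff_integrable_sq_norm hg.1).mp hg)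
  simp only [Complex.ofRealCLM_apply] at h3
  rw [h3] at h2
  exact_mod_cast h2

/-- For `q > 0` and `ψₙ` the normalized Hermite functions (an orthonormal basis of
`L²(ℝ,ℂ)`), the Mittag-Leffler Bargmann transform `B_q(φ)(z) = ∫ conj(A_q(z,x)) φ(x) dx`
is an isometry into `ML_q(ℂ)`: `B_q(φ)` is given by a power series `Σ aₙ zⁿ` with
`Σ Γ(qn+1)|aₙ|² = ‖φ‖²_{L²(ℝ)}`. -/
theorem MLB_isometry (q : ℝ) (hq : 0 < q) (ψ : ℕ → ℝ → ℂ)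
    (hmem : ∀ n, MemLp (ψ n) 2 (volume : Measure ℝ))
    (horth : ∀ j k : ℕ, ∫ x : ℝ, ψ j x * (starRingEnd ℂ) (ψ k x)
      = if j = k then (1 : ℂ) else 0)
    (htotal : ∀ φ : ℝ → ℂ, MemLp φ 2 (volume : Measure ℝ) →
      (∀ n : ℕ, (∫ x : ℝ, (starRingEnd ℂ) (ψ n x) * φ x) = 0) →
      φ =ᵐ[(volume : Measure ℝ)] 0)
    (φ : ℝ → ℂ) (hφ : MemLp φ 2 (volume : Measure ℝ)) :
    ∃ a : ℕ → ℂ,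
      (∀ z : ℂ, (∫ x : ℝ, (starRingEnd ℂ) (Aq q ψ z x) * φ x) = ∑' n : ℕ, a n * z ^ n) ∧
      (∑' n : ℕ, Real.Gamma (q * n + 1) * ‖a n‖ ^ 2) = ∫ x : ℝ, ‖φ x‖ ^ 2 := by
  classical
  have hΓpos : ∀ n : ℕ, 0 < Real.Gamma (q * n + 1) := fun n =>
    Real.Gamma_pos_of_pos (by positivity)
  have hsqpos : ∀ n : ℕ, 0 < Real.sqrt (Real.Gamma (q * n + 1)) := fun n =>
    Real.sqrt_pos.mpr (hΓpos n)
  set b : ℕ → Lp ℂ 2 (volume : Measure ℝ) := fun n => (hmem n).toLp (ψ n) with hbdef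
  have hb_ae : ∀ n, ⇑(b n) =ᵐ[(volume : Measure ℝ)] ψ n := fun n => (hmem n).coeFn_toLp
  set f : Lp ℂ 2 (volume : Measure ℝ) := hφ.toLp φ with hfdef
  have hf_ae : ⇑f =ᵐ[(volume : Measure ℝ)] φ := hφ.coeFn_toLp
  have hinner : ∀ (g h : Lp ℂ 2 (volume : Measure ℝ)) (g' h' : ℝ → ℂ),
      ⇑g =ᵐ[(volume : Measure ℝ)] g' → ⇑h =ᵐ[(volume : Measure ℝ)] h' →
      (inner ℂ g h : ℂ) = ∫ x : ℝ, (starRingEnd ℂ) (g' x) * h' x := by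
    intro g h g' h' hg hh
    rw [MeasureTheory.L2.inner_def]
    refine integral_congr_ae ?_
    filter_upwards [hg, hh] with x hgx hhx
    rw [RCLike.inner_apply, hgx, hhx, mul_comm]
  have honb : Orthonormal ℂ b := by
    rw [orthonormal_iff_ite]
    intro j k
    rw [hinner (b j) (b k) (ψ j) (ψ k) (hb_ae j) (hb_ae k)]
    have h1 : ∫ x : ℝ, (starRingEnd ℂ) (ψ j x) * ψ k x
        = (starRingEnd ℂ) (∫ x : ℝ, ψ j x * (starRingEnd ℂ) (ψ k x)) := by
      rw [← integral_conj]
      refine integral_congr_ae (Filter.Eventually.of_forall fun x => ?_)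
      simp [mul_comm]
    rw [h1, horth j k]
    split <;> simp
  have hbot : (Submodule.span ℂ (Set.range b))ᗮ = ⊥ := by
    rw [Submodule.eq_bot_iff]
    intro g hg
    have hg0 : ∀ n : ℕ, (∫ x : ℝ, (starRingEnd ℂ) (ψ n x) * (g : ℝ → ℂ) x) = 0 := by
      intro n
      rw [← hinner (b n) g (ψ n) g (hb_ae n) (Filter.EventuallyEq.refl _ _)]
      exact (Submodule.mem_orthogonal _ _).mp hg (b n) (Submodule.subset_span ⟨n, rfl⟩)
    exact (Lp.eq_zero_iff_ae_eq_zero).mpr (htotal (g : ℝ → ℂ) (Lp.memLp g) hg0)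
  set B : HilbertBasis ℕ ℂ (Lp ℂ 2 (volume : Measure ℝ)) :=
    HilbertBasis.mkOfOrthogonalEqBot honb hbot with hBdef
  have hBcoe : ∀ n, B n = b n := by
    intro n
    rw [hBdef, HilbertBasis.coe_mkOfOrthogonalEqBot]
  set c : ℕ → ℂ := fun n => (inner ℂ (b n) f : ℂ) with hcdef
  have hc : ∀ n, c n = ∫ x : ℝ, (starRingEnd ℂ) (ψ n x) * φ x := fun n =>
    hinner (b n) f (ψ n) φ (hb_ae n) hf_ae
  -- Parseval
  have hsum : HasSum (fun n => ‖c n‖ ^ 2) (‖f‖ ^ 2) := by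
    have h := B.hasSum_inner_mul_inner f f
    have h2 : (fun n => (inner ℂ f (B n) : ℂ) * inner ℂ (B n) f)
        = fun n => ((‖c n‖ ^ 2 : ℝ) : ℂ) := by
      funext n
      rw [hBcoe n]
      have h3 : (inner ℂ f (b n) : ℂ) = (starRingEnd ℂ) (c n) := (inner_conj_symm _ _).symm
      rw [h3]
      have h5 : (starRingEnd ℂ) (c n) * (c n) = ((‖c n‖ ^ 2 : ℝ) : ℂ) := by
        rw [RCLike.conj_mul]; norm_cast
      exact h5
    rw [h2, inner_self_eq_norm_sq_to_K] at h
    have h4 := h.mapL Complex.reCLM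
    simpa [← Complex.ofReal_pow] using h4
  have hnormf : ‖f‖ ^ 2 = ∫ x : ℝ, ‖φ x‖ ^ 2 := by
    have h1 : (inner ℂ f f : ℂ) = ((∫ x : ℝ, ‖φ x‖ ^ 2 : ℝ) : ℂ) := by
      rw [hinner f f φ φ hf_ae hf_ae]
      have h3 : ∫ x : ℝ, Complex.ofRealCLM (‖φ x‖ ^ 2)
          = Complex.ofRealCLM (∫ x : ℝ, ‖φ x‖ ^ 2) :=
        ContinuousLinearMap.integral_comp_comm _
          ((memLp_two_iff_integrable_sq_norm hφ.1).mp hφ)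
      simp only [Complex.ofRealCLM_apply] at h3
      rw [← h3]
      refine integral_congr_ae (Filter.Eventually.of_forall fun x => ?_)
      show (starRingEnd ℂ) (φ x) * φ x = ((‖φ x‖ ^ 2 : ℝ) : ℂ)
      rw [RCLike.conj_mul]; norm_cast
    rw [inner_self_eq_norm_sq_to_K] at h1
    have h2 : ((‖f‖ ^ 2 : ℝ) : ℂ) = ((∫ x : ℝ, ‖φ x‖ ^ 2 : ℝ) : ℂ) := by
      rw [← h1]; norm_cast
    exact_mod_cast h2
  -- the coefficients
  refine ⟨fun n => c n / (Real.sqrt (Real.Gamma (q * n + 1)) : ℂ), ?_, ?_⟩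
  · intro z
    set F : ℕ → ℝ → ℂ := fun n x =>
      z ^ n / (Real.sqrt (Real.Gamma (q * n + 1)) : ℂ) * (starRingEnd ℂ) (ψ n x) * φ x
      with hFdef
    have hpt : ∀ x : ℝ, (starRingEnd ℂ) (Aq q ψ z x) * φ x = ∑' n : ℕ, F n x := by
      intro x
      rw [Aq, starRingEnd_apply, tsum_star, ← tsum_mul_right]
      refine tsum_congr fun n => ?_
      rw [hFdef]
      simp [star_mul', ← starRingEnd_apply, map_div₀, map_pow, Complex.conj_conj,
        Complex.conj_ofReal, mul_comm]
    have hFmeas : ∀ n, AEStronglyMeasurable (F n) (volume : Measure ℝ) := by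
      intro n
      exact (((RCLike.continuous_conj.comp_aestronglyMeasurable
        (hmem n).1).const_mul _).mul hφ.1)
    have hψ2 : ∀ n, ∫⁻ x : ℝ, (‖ψ n x‖₊ : ENNReal) ^ (2:ℝ) ∂(volume : Measure ℝ) = 1 := by
      intro n
      rw [lintegral_nnnorm_sq (hmem n), integral_norm_sq_eq_one (hmem n) (by
        simpa using horth n n)]
      simp
    set Bφ : ENNReal := (∫⁻ x : ℝ, (‖φ x‖₊ : ENNReal) ^ (2:ℝ) ∂(volume : Measure ℝ))
        ^ (1/2 : ℝ) with hBφdef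
    have hBφ_ne_top : Bφ ≠ ⊤ := by
      rw [hBφdef, lintegral_nnnorm_sq hφ]
      exact ENNReal.rpow_ne_top_of_nonneg (by norm_num) ENNReal.ofReal_ne_top
    have hCS : ∀ n, ∫⁻ x : ℝ, (‖ψ n x‖₊ : ENNReal) * (‖φ x‖₊ : ENNReal)
        ∂(volume : Measure ℝ) ≤ Bφ := by
      intro n
      have hpq : Real.HolderConjugate 2 2 := Real.holderConjugate_iff.mpr ⟨by norm_num, by norm_num⟩
      have h := ENNReal.lintegral_mul_le_Lp_mul_Lq (volume : Measure ℝ) hpq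
        ((hmem n).1.enorm) (hφ.1.enorm)
      calc ∫⁻ x : ℝ, (‖ψ n x‖₊ : ENNReal) * (‖φ x‖₊ : ENNReal) ∂(volume : Measure ℝ)
          ≤ (∫⁻ x : ℝ, (‖ψ n x‖₊ : ENNReal) ^ (2:ℝ) ∂(volume : Measure ℝ)) ^ (1/2:ℝ)
            * (∫⁻ x : ℝ, (‖φ x‖₊ : ENNReal) ^ (2:ℝ) ∂(volume : Measure ℝ)) ^ (1/2:ℝ) := h
        _ = Bφ := by rw [hψ2 n, ENNReal.one_rpow, one_mul]
    have hFlint : ∀ n, ∫⁻ x : ℝ, ‖F n x‖₊ ∂(volume : Measure ℝ)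
        ≤ (‖z ^ n / (Real.sqrt (Real.Gamma (q * n + 1)) : ℂ)‖₊ : ENNReal) * Bφ := by
      intro n
      have heq : ∀ x : ℝ, (‖F n x‖₊ : ENNReal)
          = (‖z ^ n / (Real.sqrt (Real.Gamma (q * n + 1)) : ℂ)‖₊ : ENNReal)
            * ((‖ψ n x‖₊ : ENNReal) * (‖φ x‖₊ : ENNReal)) := by
        intro x
        rw [hFdef]
        simp [nnnorm_mul, mul_assoc, ← starRingEnd_apply]
      calc ∫⁻ x : ℝ, ‖F n x‖₊ ∂(volume : Measure ℝ)
          = ∫⁻ x : ℝ, (‖z ^ n / (Real.sqrt (Real.Gamma (q * n + 1)) : ℂ)‖₊ : ENNReal)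
            * ((‖ψ n x‖₊ : ENNReal) * (‖φ x‖₊ : ENNReal)) ∂(volume : Measure ℝ) :=
            lintegral_congr heq
        _ = (‖z ^ n / (Real.sqrt (Real.Gamma (q * n + 1)) : ℂ)‖₊ : ENNReal)
            * ∫⁻ x : ℝ, (‖ψ n x‖₊ : ENNReal) * (‖φ x‖₊ : ENNReal) ∂(volume : Measure ℝ) :=
            lintegral_const_mul' _ _ ENNReal.coe_ne_top
        _ ≤ _ := by exact mul_le_mul_right (hCS n) _
    have hsummable : Summable (fun n : ℕ =>
        ‖z ^ n / (Real.sqrt (Real.Gamma (q * n + 1)) : ℂ)‖₊) := by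
      rw [← NNReal.summable_coe]
      have : (fun n : ℕ => (‖z ^ n / (Real.sqrt (Real.Gamma (q * n + 1)) : ℂ)‖₊ : ℝ))
          = fun n : ℕ => ‖z‖ ^ n / Real.sqrt (Real.Gamma (q * n + 1)) := by
        funext n
        rw [coe_nnnorm, norm_div, norm_pow, Complex.norm_real,
          Real.norm_of_nonneg (hsqpos n).le]
      rw [this]
      exact summable_pow_div_sqrtGamma q hq ‖z‖ (norm_nonneg z)
    have hne_top : (∑' n : ℕ, ∫⁻ x : ℝ, ‖F n x‖₊ ∂(volume : Measure ℝ)) ≠ ⊤ := by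
      refine ne_top_of_le_ne_top ?_ (ENNReal.tsum_le_tsum hFlint)
      rw [ENNReal.tsum_mul_right]
      exact ENNReal.mul_ne_top (ENNReal.tsum_coe_ne_top_iff_summable.mpr hsummable)
        hBφ_ne_top
    calc (∫ x : ℝ, (starRingEnd ℂ) (Aq q ψ z x) * φ x)
        = ∫ x : ℝ, ∑' n : ℕ, F n x :=
          integral_congr_ae (Filter.Eventually.of_forall hpt)
      _ = ∑' n : ℕ, ∫ x : ℝ, F n x := integral_tsum hFmeas hne_top
      _ = ∑' n : ℕ, (c n / (Real.sqrt (Real.Gamma (q * n + 1)) : ℂ)) * z ^ n := by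
          refine tsum_congr fun n => ?_
          rw [hFdef]
          simp only [mul_assoc]
          rw [integral_const_mul, ← hc n]
          ring
  · have key : ∀ n : ℕ, Real.Gamma (q * n + 1)
        * ‖c n / (Real.sqrt (Real.Gamma (q * n + 1)) : ℂ)‖ ^ 2 = ‖c n‖ ^ 2 := by
      intro n
      rw [norm_div, Complex.norm_real, Real.norm_of_nonneg (hsqpos n).le, div_pow,
        Real.sq_sqrt (hΓpos n).le]
      field_simp
    calc (∑' n : ℕ, Real.Gamma (q * n + 1)
          * ‖c n / (Real.sqrt (Real.Gamma (q * n + 1)) : ℂ)‖ ^ 2)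
        = ∑' n : ℕ, ‖c n‖ ^ 2 := tsum_congr key
      _ = ‖f‖ ^ 2 := hsum.tsum_eq
      _ = ∫ x : ℝ, ‖φ x‖ ^ 2 := hnormf
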